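/- arXiv:2306.12506 — 2 statements merged into one kernel-verified Lean document; each statement's English description precedes it below -/
import Mathlib

section
/- Let T be a skew fluctuating tableau of length n with r rows. Then E(T) = ε(T) if and only if E*(T) = ε(T). Moreover, the two conditions E(T) = E*(T) and P^n(T) = T are equivalent to each other, and both follow from E(T) = ε(T). -/
open scoped Classical

noncomputable section

namespace FT

/-- A (raw) `r`-row integer vector; generalized partitions are the antitone ones. -/
abbrev GP (r : ℕ) := Fin r → ℤ

/-- The weakly decreasing rearrangement of a tuple. -/
def sortDesc {r : ℕ} (α : GP r) : GP r := fun i => (α ∘ Tuple.sort α) i.rev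

/-- Standard basis vector (0-indexed). -/
def eV {r : ℕ} (a : Fin r) : GP r := fun i => if i = a then 1 else 0

/-- Standard basis vector with 1-indexed row `a` (zero if out of range). -/
def eN (r : ℕ) (a : ℕ) : GP r := fun i => if (i : ℕ) + 1 = a then 1 else 0

/-- Indicator vector of a set of rows. -/
def indV {r : ℕ} (S : Finset (Fin r)) : GP r := fun i => if i ∈ S then 1 else 0

/-- `colStep r c μ λ`: `λ` is obtained from `μ` by adding (if `c ≥ 0`) or removing
(if `c ≤ 0`) a skew column of `|c|` boxes. -/
def colStep (r : ℕ) (c : ℤ) (μ lam : GP r) : Prop :=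
  ∃ S : Finset (Fin r), S.card = c.natAbs ∧
    (if 0 ≤ c then lam = μ + indV S else lam = μ - indV S)

/-- Skew fluctuating tableau of length `n` and type `c` (recorded at indices `0,…,n`;
values of `T` and `c` beyond those indices are irrelevant). -/
def IsSkewFT (r n : ℕ) (T : ℕ → GP r) (c : ℕ → ℤ) : Prop :=
  (∀ k ≤ n, Antitone (T k)) ∧ ∀ j < n, colStep r (c j) (T j) (T (j + 1))

/-- (Non-skew) fluctuating tableau: starts at the empty shape. -/
def IsFT (r n : ℕ) (T : ℕ → GP r) (c : ℕ → ℤ) : Prop :=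
  IsSkewFT r n T c ∧ T 0 = 0

/-- Rectangular: the final shape is constant. -/
def Rect (r n : ℕ) (T : ℕ → GP r) : Prop := ∃ m : ℤ, ∀ i, T n i = m

/-- Bender–Knuth involution `BK_i` (for `1 ≤ i ≤ n-1`). -/
def BK {r : ℕ} (i : ℕ) (T : ℕ → GP r) : ℕ → GP r :=
  fun k => if k = i then sortDesc (T (i + 1) + T (i - 1) - T i) else T k

/-- `BKseg a m = BK (a+m-1) ∘ ⋯ ∘ BK a` (apply `BK a` first). -/
def BKseg {r : ℕ} (a : ℕ) : ℕ → (ℕ → GP r) → ℕ → GP r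
  | 0 => id
  | m + 1 => BK (a + m) ∘ BKseg a m

/-- Promotion `P = BK_{n-1} ∘ ⋯ ∘ BK_1` on length-`n` tableaux. -/
def promo {r : ℕ} (n : ℕ) (T : ℕ → GP r) : ℕ → GP r := BKseg 1 (n - 1) T

/-- `BKsegRev a m = BK a ∘ ⋯ ∘ BK (a+m-1)` (apply `BK (a+m-1)` first). -/
def BKsegRev {r : ℕ} (a : ℕ) : ℕ → (ℕ → GP r) → ℕ → GP r
  | 0 => id
  | m + 1 => BKsegRev a m ∘ BK (a + m)

/-- Inverse of promotion: `P⁻¹ = BK_1 ∘ ⋯ ∘ BK_{n-1}`. -/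
def promoInv {r : ℕ} (n : ℕ) (T : ℕ → GP r) : ℕ → GP r := BKsegRev 1 (n - 1) T

def evacAux {r : ℕ} : ℕ → (ℕ → GP r) → ℕ → GP r
  | 0, T => T
  | m + 1, T => evacAux m (BKseg 1 (m + 1) T)

/-- Evacuation `E = BK_1 ∘ (BK_2∘BK_1) ∘ ⋯ ∘ (BK_{n-1}∘⋯∘BK_1)`. -/
def evac {r : ℕ} (n : ℕ) (T : ℕ → GP r) : ℕ → GP r := evacAux (n - 1) T

def devacAux {r : ℕ} (n : ℕ) : ℕ → (ℕ → GP r) → ℕ → GP r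
  | 0, T => T
  | m + 1, T => BKseg (n - (m + 1)) (m + 1) (devacAux n m T)

/-- Dual evacuation `E* = (BK_{n-1}∘⋯∘BK_1) ∘ (BK_{n-1}∘⋯∘BK_2) ∘ ⋯ ∘ BK_{n-1}`. -/
def devac {r : ℕ} (n : ℕ) (T : ℕ → GP r) : ℕ → GP r := devacAux n (n - 1) T

/-- `rev(-v)`. -/
def revNeg {r : ℕ} (v : GP r) : GP r := fun i => - v i.rev

/-- Time reversal `τ`. -/
def tauT {r : ℕ} (n : ℕ) (T : ℕ → GP r) : ℕ → GP r := fun k => T (n - k)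

/-- `ϖ`. -/
def varpiT {r : ℕ} (T : ℕ → GP r) : ℕ → GP r := fun k => revNeg (T k)

/-- `ε`. -/
def epsT {r : ℕ} (n : ℕ) (T : ℕ → GP r) : ℕ → GP r := fun k => revNeg (T (n - k))

/-- Sign of the `j`-th step of `T` (paper indexing: step `j` goes from `λ^{j-1}` to `λ^j`). -/
def sgnStep {r : ℕ} (T : ℕ → GP r) (j : ℕ) : ℤ :=
  if T j = T (j - 1) then 0 else if T (j - 1) ≤ T j then 1 else -1

/-- The switch involution `toggle_j` (paper indexing, `1 ≤ j ≤ n`). -/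
def toggleT {r : ℕ} (j : ℕ) (T : ℕ → GP r) : ℕ → GP r :=
  fun m => if m < j then T m else fun i => T m i - sgnStep T j

/-- Number of boxes added/removed in the step from `T j` to `T (j+1)`. -/
def stepSize {r : ℕ} (T : ℕ → GP r) (j : ℕ) : ℕ :=
  (Finset.univ.filter fun i : Fin r => T (j + 1) i ≠ T j i).card

/-- Cumulative step sizes: position of `T j` inside the oscillization. -/
def cum {r : ℕ} (T : ℕ → GP r) (j : ℕ) : ℕ := ∑ j' ∈ Finset.range j, stepSize T j'

/-- The `j`-th intermediate shape of the oscillization of the skew-column step `μ → λ`: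
boxes are added smallest-row-first and removed largest-row-first. -/
def oscStep {r : ℕ} (μ lam : GP r) (j : ℕ) : GP r := fun i =>
  let S := Finset.univ.filter fun i' : Fin r => lam i' ≠ μ i'
  if i ∈ S ∧ (if μ i < lam i then (S.filter fun i' => i' ≤ i).card ≤ j
              else (S.filter fun i' => i ≤ i').card ≤ j)
  then lam i else μ i

/-- Largest index `j ≤ n` with `cum T j ≤ k`. -/
def stdIdx {r : ℕ} (n : ℕ) (T : ℕ → GP r) (k : ℕ) : ℕ :=
  ((Finset.range (n + 1)).filter fun j => cum T j ≤ k).sup id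

/-- The oscillization `std(T)` of a length-`n` tableau, a tableau of length `t = Σ|c_j|`. -/
def stdT {r : ℕ} (n : ℕ) (T : ℕ → GP r) : ℕ → GP r := fun k =>
  if stdIdx n T k = n then T n
  else oscStep (T (stdIdx n T k)) (T (stdIdx n T k + 1)) (k - cum T (stdIdx n T k))

/-- Rows of the promotion–evacuation growth diagram: `PE t S u` is `P^u(S)`
for a length-`t` (oscillating) tableau `S`. -/
def PE {r : ℕ} (t : ℕ) (S : ℕ → GP r) (u : ℕ) : ℕ → GP r := (promo t)^[u] S

/-- `i ∈ {1,…,r-1}` is recorded at cell `(u,v)` of the growth diagram of `S`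
(rows 1-indexed; `λ^{u,v} = P^u(S)(v-u)`). -/
def recorded (r t : ℕ) (S : ℕ → GP r) (i u v : ℕ) : Prop :=
  ∃ a b : Fin r,
    (PE t S (u - 1) (v - u) = PE t S u (v - u - 1) + eV a ∧
     PE t S (u - 1) (v - u + 1) = PE t S u (v - u) + eV b ∧
     (a : ℕ) < i ∧ i ≤ (b : ℕ))
    ∨
    (PE t S u (v - u - 1) = PE t S (u - 1) (v - u) + eV a ∧
     PE t S u (v - u) = PE t S (u - 1) (v - u + 1) + eV b ∧
     (b : ℕ) < i ∧ i ≤ (a : ℕ))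

/-- `i ∈ PM(T)_{u,v}` for an off-diagonal entry of the promotion matrix of `T`
(`u, v ∈ {1,…,t}`, `1 ≤ i ≤ r-1`), using the oscillization `std(T)`. -/
def PMmem (r n t : ℕ) (T : ℕ → GP r) (i u v : ℕ) : Prop :=
  1 ≤ u ∧ u ≤ t ∧ 1 ≤ v ∧ v ≤ t ∧ u ≠ v ∧ 1 ≤ i ∧ i ≤ r - 1 ∧
    recorded r t (stdT n T) i u (if u < v then v else v + t)

/-- Graph of the partial promotion function `prom_i(T)`: `prom_i(T)(u) = v`.
By convention `prom_0 = prom_r = id` on `{1,…,t}`. -/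
def promRel (r n t : ℕ) (T : ℕ → GP r) (i u v : ℕ) : Prop :=
  if i = 0 ∨ i = r then 1 ≤ u ∧ u ≤ t ∧ u = v else PMmem r n t T i u v

/-- Sum of the first `i` entries (1-indexed prefix sums). -/
def pSum {r : ℕ} (v : GP r) (i : ℕ) : ℤ :=
  ∑ j ∈ Finset.univ.filter (fun j : Fin r => (j : ℕ) < i), v j

/-- The filled oscillized local-rule grid: row index `k` counts down from the top row
(`k = 0` is `std(λ → ν)`), column index `q` goes right; the left column is
`std(κ → λ)` read so that `grid cA κ λ ν k 0 = std(κ→λ)` at position `cA - k`. -/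
def grid {r : ℕ} (cA : ℕ) (κ lam ν : GP r) : ℕ → ℕ → GP r
  | 0, q => oscStep lam ν q
  | k + 1, 0 => oscStep κ lam (cA - (k + 1))
  | k + 1, q + 1 =>
      sortDesc (grid cA κ lam ν k (q + 1) + grid cA κ lam ν (k + 1) q -
        grid cA κ lam ν k q)
  termination_by k q => (k, q)

/-- 1-indexed entry of a vector (0 if out of range). -/
def ent {r : ℕ} (v : GP r) (h : ℕ) : ℤ := if hh : h - 1 < r then v ⟨h - 1, hh⟩ else 0

/-- The chain `j_0 = 1, j_h = ` least `h`-balance point of the lattice word of `T`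
weakly after `j_{h-1}` (in `{1,…,n}`), `none` once undefined. An index `j` is an
`h`-balance point iff `(T j)_h = (T j)_{h+1}` (1-indexed rows). -/
def jChain (r n : ℕ) (T : ℕ → GP r) : ℕ → Option ℕ
  | 0 => some 1
  | h + 1 =>
    match jChain r n T h with
    | none => none
    | some jp =>
      if H : ∃ j, jp ≤ j ∧ j ≤ n ∧ ent (T j) (h + 1) = ent (T j) (h + 2) then
        some (Nat.find H)
      else none

/-- `k`: the largest `h ≤ r-1` such that `j_1, …, j_h` are all defined. -/
def kVal (r n : ℕ) (T : ℕ → GP r) : ℕ :=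
  ((Finset.range r).filter fun h => (jChain r n T h).isSome).sup id

/-- `j_h`, defaulting to `0` when undefined. -/
def jval (r n : ℕ) (T : ℕ → GP r) (h : ℕ) : ℕ := (jChain r n T h).getD 0

/-- `ω_c` for `c ∈ {0,±1,…,±r}`: top-justified column of `c` ones if `c ≥ 0`,
bottom-justified column of `|c|` minus-ones if `c < 0`. -/
def omegaGP (r : ℕ) (c : ℤ) : GP r := fun i =>
  if 0 ≤ c then (if (i : ℕ) < c.natAbs then 1 else 0)
  else (if r - c.natAbs ≤ (i : ℕ) then -1 else 0)

/-- The extremal fluctuating tableau of type `c`: partial sums of the `ω_{c_j}`. -/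
def extremal (r : ℕ) (c : ℕ → ℤ) (k : ℕ) : GP r := ∑ j ∈ Finset.range k, omegaGP r (c j)

/-- Lexicographic order: the first nonzero entry of `β - α` is positive. -/
def ltLex {r : ℕ} (α β : GP r) : Prop := ∃ i : Fin r, (∀ j, j < i → α j = β j) ∧ α i < β i

/-- Cumulative sums of `|c_j|` (block boundaries). -/
def cumC (c : ℕ → ℤ) (j : ℕ) : ℕ := ∑ j' ∈ Finset.range j, (c j').natAbs

/-- Entry `(u,v)` (for `u,v ∈ {1,…,n}`) of the reduced promotion matrix `PMr^i(T)`: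
the number of cells in the block `B_u × B_v` whose promotion-matrix entry contains `i`. -/
def PMr (r n t : ℕ) (T : ℕ → GP r) (c : ℕ → ℤ) (i u v : ℕ) : ℕ :=
  (((Finset.Icc (cumC c (u - 1) + 1) (cumC c u)) ×ˢ
    (Finset.Icc (cumC c (v - 1) + 1) (cumC c v))).filter
      fun p => PMmem r n t T i p.1 p.2).card

/-- The set of `r`-row fluctuating tableaux of length `n`, shape `lam`, type `c`,
in bundled (finitely-indexed) form. -/
def FTset (r n : ℕ) (lam : GP r) (c : Fin n → ℤ) : Set (Fin (n + 1) → GP r) :=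
  {T | (∀ k, Antitone (T k)) ∧ T 0 = 0 ∧ T (Fin.last n) = lam ∧
       ∀ j : Fin n, colStep r (c j) (T j.castSucc) (T j.succ)}


section SortLemmas

variable {r : ℕ}

lemma sortDesc_antitone (v : GP r) : Antitone (sortDesc v) := by
  intro a b hab
  exact Tuple.monotone_sort v (Fin.rev_le_rev.mpr hab)

/-- sortDesc is invariant under precomposition with a permutation. -/
lemma sortDesc_comp_perm (v : GP r) (e : Equiv.Perm (Fin r)) :
    sortDesc (v ∘ e) = sortDesc v := by
  have h1 : Monotone (v ∘ ⇑((Tuple.sort (v ∘ e)).trans e)) := by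
    have := Tuple.monotone_sort (v ∘ e)
    simpa [Function.comp_assoc] using this
  have h2 : Monotone (v ∘ ⇑(Tuple.sort v)) := Tuple.monotone_sort v
  have key := Tuple.unique_monotone h1 h2
  funext i
  have := congrFun key (i.rev)
  simpa [sortDesc, Function.comp] using this

lemma sortDesc_eq_self {v : GP r} (h : Antitone v) : sortDesc v = v := by
  have h1 : Monotone (v ∘ ⇑(Tuple.sort v)) := Tuple.monotone_sort v
  have h2 : Monotone (v ∘ ⇑(Fin.revPerm (n := r))) := by
    intro a b hab
    exact h (by simpa [Fin.rev_le_rev] using hab)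
  have key := Tuple.unique_monotone h1 h2
  funext i
  have := congrFun key (i.rev)
  simpa [sortDesc, Function.comp] using this

/-- uniqueness: two antitone tuples related by a permutation are equal -/
lemma antitone_unique {f g : GP r} (hf : Antitone f) (hg : Antitone g)
    (e : Equiv.Perm (Fin r)) (hfg : ∀ x, f x = g (e x)) : f = g := by
  set π : Equiv.Perm (Fin r) :=
    (Fin.revPerm (n := r)).trans (e.trans (Fin.revPerm (n := r))) with hπ
  have hGπ : Monotone (g ∘ ⇑Fin.revPerm ∘ ⇑π) := by
    intro a b hab
    simp only [Function.comp, hπ, Equiv.trans_apply, Fin.revPerm_apply, Fin.rev_rev]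
    rw [← hfg, ← hfg]
    exact hf (Fin.rev_le_rev.mpr hab)
  have hG : Monotone (g ∘ ⇑Fin.revPerm ∘ ⇑(Equiv.refl (Fin r))) := by
    intro a b hab
    simp only [Function.comp, Equiv.refl_apply, Fin.revPerm_apply]
    exact hg (Fin.rev_le_rev.mpr hab)
  have key := Tuple.unique_monotone (f := g ∘ ⇑(Fin.revPerm (n := r)))
    (σ := π) (τ := Equiv.refl _) (by simpa [Function.comp_assoc] using hGπ)
    (by simpa [Function.comp_assoc] using hG)
  funext i
  have := congrFun key (i.rev)
  simp only [Function.comp, hπ, Equiv.trans_apply, Fin.revPerm_apply, Fin.rev_rev,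
    Equiv.refl_apply] at this
  rw [hfg]; exact this

lemma revNeg_antitone {v : GP r} (h : Antitone v) : Antitone (revNeg v) := by
  intro a b hab
  simp only [revNeg, neg_le_neg_iff]
  exact h (Fin.rev_le_rev.mpr hab)

lemma revNeg_revNeg (v : GP r) : revNeg (revNeg v) = v := by
  funext i; simp [revNeg]

lemma sortDesc_revNeg (v : GP r) : sortDesc (revNeg v) = revNeg (sortDesc v) := by
  refine antitone_unique (sortDesc_antitone _) (revNeg_antitone (sortDesc_antitone v))
    ((Fin.revPerm (n := r)).trans ((Tuple.sort (revNeg v)).trans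
      ((Fin.revPerm (n := r)).trans (Tuple.sort v).symm))) (fun x => ?_)
  simp only [sortDesc, revNeg, Function.comp, Equiv.trans_apply, Fin.revPerm_apply,
    Equiv.apply_symm_apply, Fin.rev_rev]

end SortLemmas

section SortMono

variable {r : ℕ}

/-- number of entries ≥ t -/
private def cntF (v : GP r) (t : ℤ) : ℕ := (Finset.univ.filter fun j => t ≤ v j).card

lemma cntF_sortDesc (v : GP r) (t : ℤ) : cntF (sortDesc v) t = cntF v t := by
  classical
  unfold cntF
  apply Finset.card_bij (fun j _ => (Fin.revPerm (n := r)).trans (Tuple.sort v) j)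
  · intro a ha
    simp only [Finset.mem_filter, Finset.mem_univ, true_and] at ha ⊢
    simpa [sortDesc, Function.comp] using ha
  · intro a _ b _ h
    exact ((Fin.revPerm (n := r)).trans (Tuple.sort v)).injective h
  · intro b hb
    refine ⟨((Fin.revPerm (n := r)).trans (Tuple.sort v)).symm b, ?_, by simp⟩
    simp only [Finset.mem_filter, Finset.mem_univ, true_and] at hb ⊢
    simpa [sortDesc, Function.comp] using hb

lemma le_of_lt_cntF {g : GP r} (hg : Antitone g) {t : ℤ} {i : Fin r}
    (h : (i : ℕ) + 1 ≤ cntF g t) : t ≤ g i := by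
  classical
  unfold cntF at h
  by_contra hlt
  push_neg at hlt
  have hsub : (Finset.univ.filter fun j => t ≤ g j) ⊆ Finset.Iio i := by
    intro j hj
    simp only [Finset.mem_filter, Finset.mem_univ, true_and] at hj
    simp only [Finset.mem_Iio]
    by_contra hji
    push_neg at hji
    exact absurd (le_trans hj (hg hji)) (not_le.mpr hlt)
  have := Finset.card_le_card hsub
  rw [Fin.card_Iio] at this
  omega

lemma cntF_self_ge (v : GP r) (i : Fin r) :
    (i : ℕ) + 1 ≤ cntF (sortDesc v) (sortDesc v i) := by
  classical
  have hsub : Finset.Iic i ⊆ (Finset.univ.filter fun j => sortDesc v i ≤ sortDesc v j) := by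
    intro j hj
    simp only [Finset.mem_Iic] at hj
    simp only [Finset.mem_filter, Finset.mem_univ, true_and]
    exact sortDesc_antitone v hj
  have := Finset.card_le_card hsub
  rwa [Fin.card_Iic] at this

lemma sortDesc_mono {v w : GP r} (h : v ≤ w) : sortDesc v ≤ sortDesc w := by
  intro i
  set t := sortDesc v i with ht
  have h1 : (i : ℕ) + 1 ≤ cntF v t := by rw [← cntF_sortDesc]; exact cntF_self_ge v i
  have h2 : cntF v t ≤ cntF w t := by
    apply Finset.card_le_card
    intro j hj
    simp only [Finset.mem_filter, Finset.mem_univ, true_and] at hj ⊢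
    exact le_trans hj (h j)
  have h3 : (i : ℕ) + 1 ≤ cntF (sortDesc w) t := by rw [cntF_sortDesc]; omega
  exact le_of_lt_cntF (sortDesc_antitone w) h3

end SortMono

section InvLemma

variable {r : ℕ}

lemma exists_adjacent_inversion {y : GP r} (h : ¬ Antitone y) :
    ∃ (k : ℕ) (hk : k + 1 < r), y ⟨k, by omega⟩ < y ⟨k + 1, hk⟩ := by
  by_contra hadj
  push_neg at hadj
  apply h
  have step : ∀ (k : ℕ) (hk : k + 1 < r), y ⟨k + 1, hk⟩ ≤ y ⟨k, by omega⟩ := by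
    intro k hk
    exact hadj k hk
  have main : ∀ (d : ℕ) (a b : Fin r), (b : ℕ) = (a : ℕ) + d → y b ≤ y a := by
    intro d
    induction d with
    | zero => intro a b hab; have : a = b := Fin.ext (by omega); rw [this]
    | succ d ih =>
      intro a b hab
      have hb : ((a : ℕ) + d) + 1 < r := by omega
      have h1 : y b ≤ y ⟨(a : ℕ) + d, by omega⟩ := by
        have := step ((a : ℕ) + d) hb
        have hbeq : b = ⟨(a : ℕ) + d + 1, hb⟩ := by
          apply Fin.ext; simp only [Fin.val_mk]; omega
        exact (congrArg y hbeq).le.trans this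
      exact le_trans h1 (ih a ⟨(a : ℕ) + d, by omega⟩ rfl)
  intro a b hab
  exact main ((b : ℕ) - (a : ℕ)) a b (by omega)

private def invMeasure (y : GP r) (c : ℤ) : ℕ := ∑ i : Fin r, (i : ℕ) * (y i - c).toNat

lemma inv_swap_aux (s α β : GP r) (hα : Antitone α) (hβ : Antitone β)
    (hs : ∀ i j, α i = α j → β i = β j → s i = s j) :
    ∀ (N : ℕ) (y : GP r) (c : ℤ), (∀ i, c ≤ y i) → invMeasure y c ≤ N →
      (∀ i, α i ≤ y i ∧ y i ≤ α i + 1 ∧ β i - 1 ≤ y i ∧ y i ≤ β i) →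
      sortDesc (s - sortDesc y) = sortDesc (s - y) := by
  intro N
  induction N with
  | zero =>
    intro y c hc hm hb
    by_cases hy : Antitone y
    · rw [sortDesc_eq_self hy]
    · exfalso
      obtain ⟨k, hk, hlt⟩ := exists_adjacent_inversion hy
      set i : Fin r := ⟨k, by omega⟩
      set j : Fin r := ⟨k + 1, hk⟩
      have : (i : ℕ) * (y i - c).toNat + (j : ℕ) * (y j - c).toNat ≤ invMeasure y c := by
        unfold invMeasure
        rw [← Finset.add_sum_erase _ _ (Finset.mem_univ i),
          ← Finset.add_sum_erase _ _ (Finset.mem_erase.mpr ⟨by simp [i, j, Fin.ext_iff], Finset.mem_univ j⟩)]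
        omega
      have hyj : 1 ≤ (y j - c).toNat := by
        have := hc i
        omega
      have : 0 < invMeasure y c := by
        have : 1 ≤ (j : ℕ) * (y j - c).toNat := by
          have : 1 ≤ (j : ℕ) := by simp [j]
          calc 1 = 1 * 1 := by ring
          _ ≤ (j : ℕ) * (y j - c).toNat := Nat.mul_le_mul this hyj
        omega
      omega
  | succ N ih =>
    intro y c hc hm hb
    by_cases hy : Antitone y
    · rw [sortDesc_eq_self hy]
    · obtain ⟨k, hk, hlt⟩ := exists_adjacent_inversion hy
      set i : Fin r := ⟨k, by omega⟩ with hidef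
      set j : Fin r := ⟨k + 1, hk⟩ with hjdef
      have hij : i ≠ j := by simp [hidef, hjdef, Fin.ext_iff]
      have hijle : i ≤ j := by
        simp only [hidef, hjdef, Fin.mk_le_mk]; omega
      -- key equalities
      have hαij : α i = α j := by
        have h1 := hb i; have h2 := hb j
        have := hα hijle
        omega
      have hβij : β i = β j := by
        have h1 := hb i; have h2 := hb j
        have := hβ hijle
        omega
      have hsij : s i = s j := hs i j hαij hβij
      set e := Equiv.swap i j with hedef
      set y' : GP r := y ∘ e with hy'def
      have hy'i : y' i = y j := by simp [hy'def, hedef]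
      have hy'j : y' j = y i := by simp [hy'def, hedef]
      have hy'other : ∀ k', k' ≠ i → k' ≠ j → y' k' = y k' := by
        intro k' h1 h2
        simp [hy'def, hedef, Equiv.swap_apply_of_ne_of_ne h1 h2]
      -- bounds for y'
      have hb' : ∀ i', α i' ≤ y' i' ∧ y' i' ≤ α i' + 1 ∧ β i' - 1 ≤ y' i' ∧ y' i' ≤ β i' := by
        intro k'
        by_cases h1 : k' = i
        · subst h1; rw [hy'i, hαij, hβij]; exact hb j
        · by_cases h2 : k' = j
          · subst h2; rw [hy'j, ← hαij, ← hβij]; exact hb i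
          · rw [hy'other k' h1 h2]; exact hb k'
      have hc' : ∀ i', c ≤ y' i' := fun i' => hc (e i')
      -- measure decreases
      have hmdec : invMeasure y' c < invMeasure y c := by
        unfold invMeasure
        rw [← Finset.add_sum_erase _ _ (Finset.mem_univ i),
          ← Finset.add_sum_erase _ (fun i : Fin r => (i:ℕ) * (y i - c).toNat) (Finset.mem_univ i),
          ← Finset.add_sum_erase _ _ (Finset.mem_erase.mpr ⟨hij.symm, Finset.mem_univ j⟩),
          ← Finset.add_sum_erase _ (fun i : Fin r => (i:ℕ) * (y i - c).toNat)
            (Finset.mem_erase.mpr ⟨hij.symm, Finset.mem_univ j⟩)]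
        have hrest : ∑ x ∈ (Finset.univ.erase i).erase j, (x:ℕ) * (y' x - c).toNat
            = ∑ x ∈ (Finset.univ.erase i).erase j, (x:ℕ) * (y x - c).toNat := by
          apply Finset.sum_congr rfl
          intro x hx
          simp only [Finset.mem_erase] at hx
          rw [hy'other x hx.2.1 hx.1]
        rw [hrest, hy'i, hy'j]
        have hA : (y i - c).toNat < (y j - c).toNat := by
          have h1 := hc i
          omega
        have hij' : (i : ℕ) < (j : ℕ) := by simp [hidef, hjdef]
        set A := (y i - c).toNat
        set B := (y j - c).toNat
        have : (i : ℕ) * B + (j : ℕ) * A < (i : ℕ) * A + (j : ℕ) * B := by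
          zify
          nlinarith [mul_pos (by omega : (0:ℤ) < (j:ℕ) - (i:ℕ)) (by omega : (0:ℤ) < (B:ℤ) - A)]
        omega
      -- s - y' = (s - y) ∘ e
      have hsy : s - y' = (s - y) ∘ e := by
        funext k'
        by_cases h1 : k' = i
        · subst h1
          simp only [Pi.sub_apply, hy'i, Function.comp, hedef, Equiv.swap_apply_left]
          rw [hsij]
        · by_cases h2 : k' = j
          · subst h2
            simp only [Pi.sub_apply, hy'j, Function.comp, hedef, Equiv.swap_apply_right]
            rw [hsij]
          · simp only [Pi.sub_apply, Function.comp, hedef, Equiv.swap_apply_of_ne_of_ne h1 h2]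
            rw [hy'other k' h1 h2]
      have hsort : sortDesc y' = sortDesc y := sortDesc_comp_perm y e
      have := ih y' c hc' (by omega) hb'
      rw [hsort] at this
      rw [this, hsy, sortDesc_comp_perm]

/-- Key involution lemma. -/
lemma inv_key (s α β y : GP r) (hα : Antitone α) (hβ : Antitone β)
    (hs : ∀ i j, α i = α j → β i = β j → s i = s j)
    (hb : ∀ i, α i ≤ y i ∧ y i ≤ α i + 1 ∧ β i - 1 ≤ y i ∧ y i ≤ β i) :
    sortDesc (s - sortDesc y) = sortDesc (s - y) := by
  rcases Nat.eq_zero_or_pos r with hr | hr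
  · subst hr
    have : Antitone y := fun a b _ => by exact absurd a.2 (by omega)
    rw [sortDesc_eq_self this]
  · obtain ⟨i0, -, hmin⟩ := Finset.exists_min_image Finset.univ y ⟨⟨0, hr⟩, Finset.mem_univ _⟩
    exact inv_swap_aux s α β hα hβ hs (invMeasure y (y i0)) y (y i0)
      (fun i => hmin i (Finset.mem_univ i)) le_rfl hb

end InvLemma

section StepGood

variable {r : ℕ}

/-- One skew-column step (direction forgotten). -/
def Stp (μ lam : GP r) : Prop :=
  (∀ i, μ i ≤ lam i ∧ lam i ≤ μ i + 1) ∨ (∀ i, lam i ≤ μ i ∧ μ i ≤ lam i + 1)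

lemma stp_of_colStep {c : ℤ} {μ lam : GP r} (h : colStep r c μ lam) : Stp μ lam := by
  obtain ⟨S, -, h⟩ := h
  by_cases hc : 0 ≤ c
  · rw [if_pos hc] at h
    left; intro i
    have : indV S i = 0 ∨ indV S i = 1 := by unfold indV; split <;> simp
    rw [h]; simp only [Pi.add_apply]; omega
  · rw [if_neg hc] at h
    right; intro i
    have : indV S i = 0 ∨ indV S i = 1 := by unfold indV; split <;> simp
    rw [h]; simp only [Pi.sub_apply]; omega

lemma stp_symm {μ lam : GP r} (h : Stp μ lam) : Stp lam μ := by
  rcases h with h | h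
  · right; intro i; have := h i; omega
  · left; intro i; have := h i; omega

lemma antitone_add_const {v : GP r} (h : Antitone v) (c : ℤ) :
    Antitone (fun i => v i + c) := fun a b hab => by
  simp only [add_le_add_iff_right]; exact h hab

/-- The core Bender–Knuth lemma. -/
lemma bk_core {μ lam ν : GP r} (hμ : Antitone μ) (hlam : Antitone lam) (hν : Antitone ν)
    (h1 : Stp μ lam) (h2 : Stp lam ν) :
    Antitone (sortDesc (μ + ν - lam)) ∧ Stp μ (sortDesc (μ + ν - lam)) ∧
      Stp (sortDesc (μ + ν - lam)) ν ∧
      sortDesc (μ + ν - sortDesc (μ + ν - lam)) = lam := by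
  set y : GP r := μ + ν - lam with hy
  have hyi : ∀ i, y i = μ i + ν i - lam i := fun i => by
    simp only [hy, Pi.add_apply, Pi.sub_apply]
  have hsy : μ + ν - y = lam := by
    funext i; simp only [Pi.add_apply, Pi.sub_apply, hyi i]; ring
  have lo : ∀ (v : GP r), Antitone v → (∀ i, v i ≤ y i) → ∀ i, v i ≤ sortDesc y i := by
    intro v hv h i
    have := sortDesc_mono (fun j => h j : v ≤ y) i
    rwa [sortDesc_eq_self hv] at this
  have hi : ∀ (w : GP r), Antitone w → (∀ i, y i ≤ w i) → ∀ i, sortDesc y i ≤ w i := by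
    intro w hw h i
    have := sortDesc_mono (fun j => h j : y ≤ w) i
    rwa [sortDesc_eq_self hw] at this
  have inv : ∀ (α β : GP r), Antitone α → Antitone β →
      (∃ d : ℤ, ∀ i, α i = μ i + d) → (∃ d : ℤ, ∀ i, β i = ν i + d) →
      (∀ i, α i ≤ y i ∧ y i ≤ α i + 1 ∧ β i - 1 ≤ y i ∧ y i ≤ β i) →
      sortDesc (μ + ν - sortDesc y) = lam := by
    intro α β hα hβ ⟨dα, hdα⟩ ⟨dβ, hdβ⟩ hb
    have := inv_key (μ + ν) α β y hα hβ
      (fun i j hij hij2 => by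
        have e1 := hdα i; have e2 := hdα j; have e3 := hdβ i; have e4 := hdβ j
        simp only [Pi.add_apply]; omega) hb
    rw [this, hsy, sortDesc_eq_self hlam]
  rcases h1 with h1 | h1 <;> rcases h2 with h2 | h2
  · -- up, up : y ∈ [μ, μ+1] ∩ [ν-1, ν]
    have l1 := lo μ hμ (fun i => by have := h2 i; have := hyi i; beta_reduce at *; omega)
    have l2 := hi (fun i => μ i + 1) (antitone_add_const hμ 1)
      (fun i => by have := h2 i; have := hyi i; beta_reduce at *; omega)
    have l3 := lo (fun i => ν i - 1) (antitone_add_const hν (-1))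
      (fun i => by have := h1 i; have := hyi i; beta_reduce at *; omega)
    have l4 := hi ν hν (fun i => by have := h1 i; have := hyi i; beta_reduce at *; omega)
    refine ⟨sortDesc_antitone y, Or.inl (fun i => ⟨l1 i, l2 i⟩),
      Or.inl (fun i => ⟨l4 i, by have := l3 i; beta_reduce at *; omega⟩), ?_⟩
    exact inv μ ν hμ hν ⟨0, fun i => by ring⟩ ⟨0, fun i => by ring⟩
      (fun i => by have := h1 i; have := h2 i; have := hyi i; beta_reduce at *; omega)
  · -- up, down : y ∈ [μ-1, μ] ∩ [ν-1, ν]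
    have l1 := lo (fun i => μ i - 1) (antitone_add_const hμ (-1))
      (fun i => by have := h2 i; have := hyi i; beta_reduce at *; omega)
    have l2 := hi μ hμ (fun i => by have := h2 i; have := hyi i; beta_reduce at *; omega)
    have l3 := lo (fun i => ν i - 1) (antitone_add_const hν (-1))
      (fun i => by have := h1 i; have := hyi i; beta_reduce at *; omega)
    have l4 := hi ν hν (fun i => by have := h1 i; have := hyi i; beta_reduce at *; omega)
    refine ⟨sortDesc_antitone y, Or.inr (fun i => ⟨l2 i, by have := l1 i; beta_reduce at *; omega⟩),
      Or.inl (fun i => ⟨l4 i, by have := l3 i; beta_reduce at *; omega⟩), ?_⟩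
    exact inv (fun i => μ i - 1) ν (antitone_add_const hμ (-1)) hν
      ⟨-1, fun i => by ring⟩ ⟨0, fun i => by ring⟩
      (fun i => by have := h1 i; have := h2 i; have := hyi i; beta_reduce at *; omega)
  · -- down, up : y ∈ [μ, μ+1] ∩ [ν, ν+1]
    have l1 := lo μ hμ (fun i => by have := h2 i; have := hyi i; beta_reduce at *; omega)
    have l2 := hi (fun i => μ i + 1) (antitone_add_const hμ 1)
      (fun i => by have := h2 i; have := hyi i; beta_reduce at *; omega)
    have l3 := lo ν hν (fun i => by have := h1 i; have := hyi i; beta_reduce at *; omega)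
    have l4 := hi (fun i => ν i + 1) (antitone_add_const hν 1)
      (fun i => by have := h1 i; have := hyi i; beta_reduce at *; omega)
    refine ⟨sortDesc_antitone y, Or.inl (fun i => ⟨l1 i, l2 i⟩),
      Or.inr (fun i => ⟨l3 i, by have := l4 i; beta_reduce at *; omega⟩), ?_⟩
    exact inv μ (fun i => ν i + 1) hμ (antitone_add_const hν 1)
      ⟨0, fun i => by ring⟩ ⟨1, fun i => by ring⟩
      (fun i => by have := h1 i; have := h2 i; have := hyi i; beta_reduce at *; omega)
  · -- down, down : y ∈ [μ-1, μ] ∩ [ν, ν+1]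
    have l1 := lo (fun i => μ i - 1) (antitone_add_const hμ (-1))
      (fun i => by have := h2 i; have := hyi i; beta_reduce at *; omega)
    have l2 := hi μ hμ (fun i => by have := h2 i; have := hyi i; beta_reduce at *; omega)
    have l3 := lo ν hν (fun i => by have := h1 i; have := hyi i; beta_reduce at *; omega)
    have l4 := hi (fun i => ν i + 1) (antitone_add_const hν 1)
      (fun i => by have := h1 i; have := hyi i; beta_reduce at *; omega)
    refine ⟨sortDesc_antitone y, Or.inr (fun i => ⟨l2 i, by have := l1 i; beta_reduce at *; omega⟩),
      Or.inr (fun i => ⟨l3 i, by have := l4 i; beta_reduce at *; omega⟩), ?_⟩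
    exact inv (fun i => μ i - 1) (fun i => ν i + 1) (antitone_add_const hμ (-1))
      (antitone_add_const hν 1) ⟨-1, fun i => by ring⟩ ⟨1, fun i => by ring⟩
      (fun i => by have := h1 i; have := h2 i; have := hyi i; beta_reduce at *; omega)

end StepGood

section GoodDef

variable {r : ℕ}

/-- Goodness: all shapes antitone, consecutive shapes differ by a skew column. -/
def Good (n : ℕ) (T : ℕ → GP r) : Prop :=
  (∀ k ≤ n, Antitone (T k)) ∧ ∀ j < n, Stp (T j) (T (j + 1))

lemma good_of_isSkewFT {n : ℕ} {T : ℕ → GP r} {c : ℕ → ℤ} (h : IsSkewFT r n T c) :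
    Good n T := ⟨h.1, fun j hj => stp_of_colStep (h.2 j hj)⟩

end GoodDef

section Word

variable {r : ℕ}

lemma BK_at (i : ℕ) (T : ℕ → GP r) :
    BK i T i = sortDesc (T (i + 1) + T (i - 1) - T i) := by simp [BK]

lemma BK_ne {i k : ℕ} (h : k ≠ i) (T : ℕ → GP r) : BK i T k = T k := by simp [BK, h]

variable {n : ℕ}

lemma BK_good {T : ℕ → GP r} {i : ℕ} (h1 : 1 ≤ i) (h2 : i + 1 ≤ n)
    (hg : Good n T) : Good n (BK i T) := by
  have hcore := bk_core (hg.1 (i-1) (by omega)) (hg.1 i (by omega)) (hg.1 (i+1) h2)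
    (by have := hg.2 (i-1) (by omega); rwa [show i - 1 + 1 = i by omega] at this)
    (hg.2 i (by omega))
  have hxy : T (i+1) + T (i-1) - T i = T (i-1) + T (i+1) - T i := by rw [add_comm]
  constructor
  · intro k hk
    rcases eq_or_ne k i with hki | hki
    · rw [hki, BK_at, hxy]; exact hcore.1
    · rw [BK_ne hki]; exact hg.1 k hk
  · intro j hj
    rcases eq_or_ne j i with hji | hji
    · rw [hji, BK_at, BK_ne (show i + 1 ≠ i by omega), hxy]
      exact hcore.2.2.1
    · rcases eq_or_ne (j + 1) i with hji' | hji'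
      · rw [BK_ne hji, hji', BK_at, hxy, show j = i - 1 by omega]
        exact hcore.2.1
      · rw [BK_ne hji, BK_ne hji']
        exact hg.2 j hj

lemma BK_invol {T : ℕ → GP r} {i : ℕ} (h1 : 1 ≤ i) (h2 : i + 1 ≤ n)
    (hg : Good n T) : BK i (BK i T) = T := by
  have hcore := bk_core (hg.1 (i-1) (by omega)) (hg.1 i (by omega)) (hg.1 (i+1) h2)
    (by have := hg.2 (i-1) (by omega); rwa [show i - 1 + 1 = i by omega] at this)
    (hg.2 i (by omega))
  have hxy : T (i+1) + T (i-1) - T i = T (i-1) + T (i+1) - T i := by rw [add_comm]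
  funext k
  rcases eq_or_ne k i with hki | hki
  · rw [hki, BK_at, BK_ne (by omega : i + 1 ≠ i), BK_ne (by omega : i - 1 ≠ i), BK_at, hxy]
    rw [show T (i+1) + T (i-1) - sortDesc (T (i-1) + T (i+1) - T i)
        = T (i-1) + T (i+1) - sortDesc (T (i-1) + T (i+1) - T i) by rw [add_comm (T (i+1))]]
    exact hcore.2.2.2
  · rw [BK_ne hki, BK_ne hki]

lemma BK_comm {i j : ℕ} (h : i + 2 ≤ j) (T : ℕ → GP r) :
    BK i (BK j T) = BK j (BK i T) := by
  funext k
  rcases eq_or_ne k i with hki | hki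
  · rw [hki, BK_ne (by omega : i ≠ j), BK_at, BK_at,
      BK_ne (by omega : i + 1 ≠ j) , BK_ne (by omega : i - 1 ≠ j), BK_ne (by omega : i ≠ j)]
  · rcases eq_or_ne k j with hkj | hkj
    · rw [hkj, BK_ne (by omega : j ≠ i), BK_at, BK_at,
        BK_ne (by omega : j + 1 ≠ i), BK_ne (by omega : j - 1 ≠ i), BK_ne (by omega : j ≠ i)]
    · rw [BK_ne hki, BK_ne hkj, BK_ne hkj, BK_ne hki]

lemma bkseg_succ (a m : ℕ) (T : ℕ → GP r) :
    BKseg a (m + 1) T = BK (a + m) (BKseg a m T) := rfl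

lemma bkseg_one (a : ℕ) (T : ℕ → GP r) : BKseg a 1 T = BK a T := rfl

lemma bksegRev_succ (a m : ℕ) (T : ℕ → GP r) :
    BKsegRev a (m + 1) T = BKsegRev a m (BK (a + m) T) := rfl

lemma bkseg_append (a m₁ m₂ : ℕ) (T : ℕ → GP r) :
    BKseg (a + m₁) m₂ (BKseg a m₁ T) = BKseg a (m₁ + m₂) T := by
  induction m₂ with
  | zero => rfl
  | succ m₂ ih =>
    rw [bkseg_succ, ih, show a + m₁ + m₂ = a + (m₁ + m₂) by omega,
      show m₁ + (m₂ + 1) = (m₁ + m₂) + 1 by omega, bkseg_succ]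

lemma bkseg_peel (a m : ℕ) (T : ℕ → GP r) :
    BKseg a (m + 1) T = BKseg (a + 1) m (BK a T) := by
  have := bkseg_append a 1 m T
  rw [show 1 + m = m + 1 by omega] at this
  rw [← this, bkseg_one]

lemma bksegRev_cons (a m : ℕ) (T : ℕ → GP r) :
    BKsegRev a (m + 1) T = BK a (BKsegRev (a + 1) m T) := by
  induction m generalizing T with
  | zero => rfl
  | succ m ih =>
    rw [bksegRev_succ, ih, bksegRev_succ, show a + 1 + m = a + (m + 1) by omega]

lemma bk_bkseg_comm_hi {b m j : ℕ} (h : b + m + 1 ≤ j) (T : ℕ → GP r) :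
    BK j (BKseg b m T) = BKseg b m (BK j T) := by
  induction m generalizing T with
  | zero => rfl
  | succ m ih =>
    rw [bkseg_succ, (BK_comm (by omega : b + m + 2 ≤ j) _).symm, ih (by omega), bkseg_succ]

lemma bk_bkseg_comm_lo {b m j : ℕ} (h : j + 2 ≤ b) (T : ℕ → GP r) :
    BK j (BKseg b m T) = BKseg b m (BK j T) := by
  induction m generalizing T with
  | zero => rfl
  | succ m ih =>
    rw [bkseg_succ, BK_comm (by omega : j + 2 ≤ b + m) _, ih, bkseg_succ]

lemma bkseg_bkseg_comm_hi {a b m m' : ℕ} (h : b + m' + 1 ≤ a) (T : ℕ → GP r) :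
    BKseg a m (BKseg b m' T) = BKseg b m' (BKseg a m T) := by
  induction m generalizing T with
  | zero => rfl
  | succ m ih =>
    rw [bkseg_succ, ih, bk_bkseg_comm_hi (by omega), bkseg_succ]

lemma evacAux_succ (m : ℕ) (T : ℕ → GP r) :
    evacAux (m + 1) T = evacAux m (BKseg 1 (m + 1) T) := rfl

lemma bk_evacAux_comm {p j : ℕ} (h : p + 2 ≤ j) (T : ℕ → GP r) :
    BK j (evacAux p T) = evacAux p (BK j T) := by
  induction p generalizing T with
  | zero => rfl
  | succ p ih =>
    rw [evacAux_succ, ih (by omega), bk_bkseg_comm_hi (by omega), evacAux_succ]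

lemma bkseg_evacAux_comm {p a m : ℕ} (h : p + 2 ≤ a) (T : ℕ → GP r) :
    BKseg a m (evacAux p T) = evacAux p (BKseg a m T) := by
  induction m generalizing T with
  | zero => rfl
  | succ m ih =>
    rw [bkseg_succ, ih, bk_evacAux_comm (by omega), bkseg_succ]

/-- W0: the fundamental exchange identity. -/
lemma W0 (m : ℕ) (T : ℕ → GP r) :
    BKsegRev 1 (m + 1) (evacAux m T) = evacAux m (BKseg 1 (m + 1) T) := by
  induction m generalizing T with
  | zero => rfl
  | succ m ih =>
    have e1 : BKsegRev 1 (m + 2) (evacAux (m + 1) T)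
        = BKsegRev 1 (m + 1) (BK (m + 2) (evacAux (m + 1) T)) := by
      rw [bksegRev_succ, show 1 + (m + 1) = m + 2 by omega]
    rw [e1, evacAux_succ, bk_evacAux_comm (by omega), ih,
      show BK (m + 2) (BKseg 1 (m + 1) T) = BKseg 1 (m + 2) T by
        have h := bkseg_succ 1 (m + 1) T
        rw [show 1 + (m + 1) = m + 2 by omega] at h
        exact h.symm, ← evacAux_succ]

/-- Second recursion for evacuation. -/
lemma evacAux_rec2 (m : ℕ) (T : ℕ → GP r) :
    evacAux (m + 1) T = BKsegRev 1 (m + 1) (evacAux m T) := (W0 m T).symm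

end Word

section Word2

variable {r n : ℕ}

lemma tau_apply (S : ℕ → GP r) (k : ℕ) : tauT n S k = S (n - k) := rfl

lemma BK_tau {i : ℕ} (h1 : 1 ≤ i) (h2 : i + 1 ≤ n) (S : ℕ → GP r) :
    BK i (tauT n S) = tauT n (BK (n - i) S) := by
  funext k
  rcases eq_or_ne k i with hki | hki
  · rw [hki, BK_at, tau_apply, tau_apply, tau_apply, tau_apply, BK_at,
      show n - (i + 1) = n - i - 1 by omega, show n - (i - 1) = n - i + 1 by omega,
      add_comm (S (n - i - 1))]
  · rw [BK_ne hki, tau_apply, tau_apply, BK_ne (show n - k ≠ n - i by omega)]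

lemma tau_bksegRev : ∀ (k : ℕ), k + 1 ≤ n → ∀ (S : ℕ → GP r),
    BKsegRev 1 k (tauT n S) = tauT n (BKseg (n - k) k S) := by
  intro k
  induction k with
  | zero => intro _ S; rfl
  | succ k ih =>
    intro hk S
    calc BKsegRev 1 (k + 1) (tauT n S)
        = BKsegRev 1 k (BK (k + 1) (tauT n S)) := by
          rw [bksegRev_succ, show 1 + k = k + 1 by omega]
      _ = BKsegRev 1 k (tauT n (BK (n - (k + 1)) S)) := by
          rw [BK_tau (by omega) hk]
      _ = tauT n (BKseg (n - k) k (BK (n - (k + 1)) S)) := ih (by omega) _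
      _ = tauT n (BKseg (n - (k + 1)) (k + 1) S) := by
          rw [bkseg_peel (n - (k + 1)) k, show n - (k + 1) + 1 = n - k by omega]

lemma evac_tau : ∀ (m : ℕ), m + 1 ≤ n → ∀ S : ℕ → GP r,
    evacAux m (tauT n S) = tauT n (devacAux n m S) := by
  intro m
  induction m with
  | zero => intro _ S; rfl
  | succ m ih =>
    intro hm S
    calc evacAux (m + 1) (tauT n S)
        = BKsegRev 1 (m + 1) (evacAux m (tauT n S)) := evacAux_rec2 _ _
      _ = BKsegRev 1 (m + 1) (tauT n (devacAux n m S)) := by rw [ih (by omega)]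
      _ = tauT n (BKseg (n - (m + 1)) (m + 1) (devacAux n m S)) := tau_bksegRev (m + 1) hm _
      _ = tauT n (devacAux n (m + 1) S) := rfl

lemma varpi_apply (S : ℕ → GP r) (k : ℕ) : varpiT S k = revNeg (S k) := rfl

lemma revNeg_lin (u v w : GP r) : revNeg (u + v - w) = revNeg u + revNeg v - revNeg w := by
  funext i
  simp only [revNeg, Pi.add_apply, Pi.sub_apply]
  ring

lemma BK_varpi (i : ℕ) (S : ℕ → GP r) : BK i (varpiT S) = varpiT (BK i S) := by
  funext k
  rcases eq_or_ne k i with hki | hki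
  · rw [hki, BK_at, varpi_apply, varpi_apply, varpi_apply, varpi_apply, BK_at,
      ← revNeg_lin, sortDesc_revNeg]
  · rw [BK_ne hki, varpi_apply, varpi_apply, BK_ne hki]

lemma bkseg_varpi (a m : ℕ) (S : ℕ → GP r) :
    BKseg a m (varpiT S) = varpiT (BKseg a m S) := by
  induction m with
  | zero => rfl
  | succ m ih => rw [bkseg_succ, ih, BK_varpi, bkseg_succ]

lemma evacAux_varpi : ∀ (m : ℕ) (S : ℕ → GP r),
    evacAux m (varpiT S) = varpiT (evacAux m S) := by
  intro m
  induction m with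
  | zero => intro S; rfl
  | succ m ih => intro S; rw [evacAux_succ, bkseg_varpi, ih, evacAux_succ]

lemma devacAux_varpi : ∀ (m : ℕ) (S : ℕ → GP r),
    devacAux n m (varpiT S) = varpiT (devacAux n m S) := by
  intro m
  induction m with
  | zero => intro S; rfl
  | succ m ih =>
    intro S
    show BKseg (n - (m+1)) (m+1) (devacAux n m (varpiT S))
        = varpiT (BKseg (n - (m+1)) (m+1) (devacAux n m S))
    rw [ih, bkseg_varpi]

/-! ### Goodness closure -/

lemma bkseg_good (a : ℕ) : ∀ (m : ℕ) (T : ℕ → GP r), 1 ≤ a → a + m ≤ n →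
    Good n T → Good n (BKseg a m T) := by
  intro m
  induction m with
  | zero => intro T _ _ hg; exact hg
  | succ m ih =>
    intro T h1 h2 hg
    rw [bkseg_succ]
    exact BK_good (by omega) (by omega) (ih T h1 (by omega) hg)

lemma bksegRev_good (a : ℕ) : ∀ (m : ℕ) (T : ℕ → GP r), 1 ≤ a → a + m ≤ n →
    Good n T → Good n (BKsegRev a m T) := by
  intro m
  induction m with
  | zero => intro T _ _ hg; exact hg
  | succ m ih =>
    intro T h1 h2 hg
    rw [bksegRev_succ]
    exact ih _ h1 (by omega) (BK_good (by omega) (by omega) hg)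

lemma evacAux_good : ∀ (m : ℕ), m + 1 ≤ n → ∀ T : ℕ → GP r,
    Good n T → Good n (evacAux m T) := by
  intro m
  induction m with
  | zero => intro _ T hg; exact hg
  | succ m ih =>
    intro hm T hg
    rw [evacAux_succ]
    exact ih (by omega) _ (bkseg_good 1 (m + 1) T (by omega) (by omega) hg)

lemma devacAux_good : ∀ (m : ℕ), m + 1 ≤ n → ∀ T : ℕ → GP r,
    Good n T → Good n (devacAux n m T) := by
  intro m
  induction m with
  | zero => intro _ T hg; exact hg
  | succ m ih =>
    intro hm T hg
    show Good n (BKseg (n - (m+1)) (m+1) (devacAux n m T))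
    exact bkseg_good _ _ _ (by omega) (by omega) (ih (by omega) T hg)

/-! ### Inverses on Good tableaux -/

lemma seg_inv_left (a : ℕ) : ∀ (m : ℕ) (T : ℕ → GP r), 1 ≤ a → a + m ≤ n →
    Good n T → BKsegRev a m (BKseg a m T) = T := by
  intro m
  induction m with
  | zero => intro T _ _ _; rfl
  | succ m ih =>
    intro T h1 h2 hg
    rw [bkseg_succ, bksegRev_succ,
      BK_invol (by omega) (by omega) (bkseg_good a m T h1 (by omega) hg)]
    exact ih T h1 (by omega) hg

lemma seg_inv_right (a : ℕ) : ∀ (m : ℕ) (T : ℕ → GP r), 1 ≤ a → a + m ≤ n →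
    Good n T → BKseg a m (BKsegRev a m T) = T := by
  intro m
  induction m with
  | zero => intro T _ _ _; rfl
  | succ m ih =>
    intro T h1 h2 hg
    rw [bksegRev_succ, bkseg_succ, ih _ h1 (by omega) (BK_good (by omega) (by omega) hg),
      BK_invol (by omega) (by omega) hg]

lemma evac_invol : ∀ (m : ℕ), m + 1 ≤ n → ∀ T : ℕ → GP r,
    Good n T → evacAux m (evacAux m T) = T := by
  intro m
  induction m with
  | zero => intro _ T _; rfl
  | succ m ih =>
    intro hm T hg
    calc evacAux (m + 1) (evacAux (m + 1) T)
        = BKsegRev 1 (m + 1) (evacAux m (evacAux (m + 1) T)) := evacAux_rec2 _ _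
      _ = BKsegRev 1 (m + 1) (evacAux m (evacAux m (BKseg 1 (m + 1) T))) := rfl
      _ = BKsegRev 1 (m + 1) (BKseg 1 (m + 1) T) := by
          rw [ih (by omega) _ (bkseg_good 1 (m + 1) T (by omega) (by omega) hg)]
      _ = T := seg_inv_left 1 (m + 1) T (by omega) (by omega) hg

lemma bk_devacAux_comm : ∀ (m j : ℕ), j + 2 + m ≤ n → ∀ T : ℕ → GP r,
    BK j (devacAux n m T) = devacAux n m (BK j T) := by
  intro m
  induction m with
  | zero => intro _ _ _; rfl
  | succ m ih =>
    intro j h T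
    show BK j (BKseg (n - (m+1)) (m+1) (devacAux n m T))
        = BKseg (n - (m+1)) (m+1) (devacAux n m (BK j T))
    rw [bk_bkseg_comm_lo (by omega), ih j (by omega)]

lemma dualW0 : ∀ (m : ℕ), m + 2 ≤ n → ∀ T : ℕ → GP r,
    BKseg (n - m - 1) (m + 1) (devacAux n m T)
      = devacAux n m (BKsegRev (n - m - 1) (m + 1) T) := by
  intro m
  induction m with
  | zero => intro _ T; rfl
  | succ m ih =>
    intro h T
    have e2 : n - (m + 1) - 1 = n - m - 2 := by omega
    rw [e2]
    calc BKseg (n - m - 2) (m + 2) (devacAux n (m + 1) T)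
        = BKseg (n - m - 1) (m + 1) (BK (n - m - 2) (devacAux n (m + 1) T)) := by
          rw [bkseg_peel (n - m - 2) (m + 1), show n - m - 2 + 1 = n - m - 1 by omega]
      _ = BKseg (n - m - 1) (m + 1) (BK (n - m - 2)
            (devacAux n m (BKsegRev (n - m - 1) (m + 1) T))) := by
          rw [show devacAux n (m+1) T = BKseg (n - (m+1)) (m+1) (devacAux n m T) from rfl,
            show n - (m + 1) = n - m - 1 by omega, ih (by omega) T]
      _ = BKseg (n - m - 1) (m + 1)
            (devacAux n m (BK (n - m - 2) (BKsegRev (n - m - 1) (m + 1) T))) := by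
          rw [bk_devacAux_comm m (n - m - 2) (by omega)]
      _ = BKseg (n - m - 1) (m + 1) (devacAux n m (BKsegRev (n - m - 2) (m + 2) T)) := by
          rw [show BK (n - m - 2) (BKsegRev (n - m - 1) (m + 1) T)
              = BKsegRev (n - m - 2) (m + 2) T by
            rw [bksegRev_cons (n - m - 2) (m + 1), show n - m - 2 + 1 = n - m - 1 by omega]]
      _ = devacAux n (m + 1) (BKsegRev (n - m - 2) (m + 2) T) := by
          rw [show devacAux n (m+1) (BKsegRev (n - m - 2) (m + 2) T)
              = BKseg (n - (m+1)) (m+1) (devacAux n m (BKsegRev (n - m - 2) (m + 2) T)) from rfl,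
            show n - (m + 1) = n - m - 1 by omega]

lemma devacAux_rec2 {m : ℕ} (h : m + 2 ≤ n) (T : ℕ → GP r) :
    devacAux n (m + 1) T = devacAux n m (BKsegRev (n - m - 1) (m + 1) T) := by
  rw [show devacAux n (m+1) T = BKseg (n - (m+1)) (m+1) (devacAux n m T) from rfl,
    show n - (m + 1) = n - m - 1 by omega, dualW0 m h T]

lemma devac_invol : ∀ (m : ℕ), m + 1 ≤ n → ∀ T : ℕ → GP r,
    Good n T → devacAux n m (devacAux n m T) = T := by
  intro m
  induction m with
  | zero => intro _ T _; rfl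
  | succ m ih =>
    intro hm T hg
    calc devacAux n (m + 1) (devacAux n (m + 1) T)
        = BKseg (n - m - 1) (m + 1) (devacAux n m (devacAux n (m + 1) T)) := by
          rw [show devacAux n (m+1) (devacAux n (m + 1) T)
              = BKseg (n - (m+1)) (m+1) (devacAux n m (devacAux n (m + 1) T)) from rfl,
            show n - (m + 1) = n - m - 1 by omega]
      _ = BKseg (n - m - 1) (m + 1)
            (devacAux n m (devacAux n m (BKsegRev (n - m - 1) (m + 1) T))) := by
          rw [devacAux_rec2 hm]
      _ = BKseg (n - m - 1) (m + 1) (BKsegRev (n - m - 1) (m + 1) T) := by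
          rw [ih (by omega) _ (bksegRev_good _ _ _ (by omega) (by omega) hg)]
      _ = T := seg_inv_right _ _ _ (by omega) (by omega) hg

end Word2

section Word3

variable {r n : ℕ}

/-- The promotion-power identity, inner induction. -/
lemma claim2 (N : ℕ) (T : ℕ → GP r) : ∀ j ≤ N,
    devacAux (N + 2) j (evacAux (N + 1) T)
      = evacAux (N - j) ((BKseg 1 (N + 1))^[j + 1] T) := by
  intro j
  induction j with
  | zero =>
    intro _
    show evacAux (N + 1) T = evacAux (N - 0) ((BKseg 1 (N + 1))^[1] T)
    rw [Nat.sub_zero, Function.iterate_one, evacAux_succ]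
  | succ j ih =>
    intro hj
    have hj' : j ≤ N := by omega
    show BKseg ((N + 2) - (j + 1)) (j + 1) (devacAux (N + 2) j (evacAux (N + 1) T))
        = evacAux (N - (j + 1)) ((BKseg 1 (N + 1))^[j + 2] T)
    rw [ih hj', show (N + 2) - (j + 1) = N + 1 - j by omega]
    obtain ⟨p, hp⟩ : ∃ p, N - j = p + 1 := ⟨N - j - 1, by omega⟩
    rw [hp, evacAux_succ, bkseg_evacAux_comm (show p + 2 ≤ N + 1 - j by omega)]
    have happ := bkseg_append 1 (p + 1) (j + 1) ((BKseg 1 (N + 1))^[j + 1] T)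
    rw [show 1 + (p + 1) = N + 1 - j by omega, show (p + 1) + (j + 1) = N + 1 by omega] at happ
    rw [happ, show N - (j + 1) = p by omega,
      show BKseg 1 (N + 1) ((BKseg 1 (N + 1))^[j + 1] T) = (BKseg 1 (N + 1))^[j + 2] T from
        (Function.iterate_succ_apply' _ _ _).symm]

/-- `E* ∘ E = P^n` (an exact identity, valid for every sequence). -/
lemma mainP : ∀ (n : ℕ) (T : ℕ → GP r), devac n (evac n T) = (promo n)^[n] T := by
  intro n T
  match n with
  | 0 => rfl
  | 1 => rfl
  | (N + 2) =>
    show devacAux (N + 2) (N + 1) (evacAux (N + 1) T) = (BKseg 1 (N + 1))^[N + 2] T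
    have e1 : devacAux (N + 2) (N + 1) (evacAux (N + 1) T)
        = BKseg ((N + 2) - (N + 1)) (N + 1) (devacAux (N + 2) N (evacAux (N + 1) T)) := rfl
    rw [e1, claim2 N T N le_rfl, Nat.sub_self, show (N + 2) - (N + 1) = 1 by omega,
      show evacAux 0 ((BKseg 1 (N + 1))^[N + 1] T) = (BKseg 1 (N + 1))^[N + 1] T from rfl,
      ← Function.iterate_succ_apply' (BKseg 1 (N + 1))]

/-! ### congruence on `[0, n]` -/

/-- Agreement on the window `[0, n]`. -/
def Eqn (n : ℕ) (S S' : ℕ → GP r) : Prop := ∀ k ≤ n, S k = S' k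

lemma bk_cong {i : ℕ} (h : i + 1 ≤ n) {S S' : ℕ → GP r} (hE : Eqn n S S') :
    Eqn n (BK i S) (BK i S') := by
  intro k hk
  rcases eq_or_ne k i with hki | hki
  · rw [hki, BK_at, BK_at, hE (i + 1) h, hE (i - 1) (by omega), hE i (by omega)]
  · rw [BK_ne hki, BK_ne hki, hE k hk]

lemma bkseg_cong (a : ℕ) : ∀ (m : ℕ), a + m ≤ n → ∀ {S S' : ℕ → GP r}, Eqn n S S' →
    Eqn n (BKseg a m S) (BKseg a m S') := by
  intro m
  induction m with
  | zero => intro _ _ _ hE; exact hE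
  | succ m ih =>
    intro h S S' hE
    rw [bkseg_succ, bkseg_succ]
    exact bk_cong (by omega) (ih (by omega) hE)

lemma evacAux_cong : ∀ (m : ℕ), m + 1 ≤ n → ∀ {S S' : ℕ → GP r}, Eqn n S S' →
    Eqn n (evacAux m S) (evacAux m S') := by
  intro m
  induction m with
  | zero => intro _ _ _ hE; exact hE
  | succ m ih =>
    intro h S S' hE
    rw [evacAux_succ, evacAux_succ]
    exact ih (by omega) (bkseg_cong 1 (m + 1) (by omega) hE)

lemma devacAux_cong : ∀ (m : ℕ), m + 1 ≤ n → ∀ {S S' : ℕ → GP r}, Eqn n S S' →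
    Eqn n (devacAux n m S) (devacAux n m S') := by
  intro m
  induction m with
  | zero => intro _ _ _ hE; exact hE
  | succ m ih =>
    intro h S S' hE
    show Eqn n (BKseg (n - (m+1)) (m+1) (devacAux n m S)) (BKseg (n - (m+1)) (m+1) (devacAux n m S'))
    exact bkseg_cong _ _ (by omega) (ih (by omega) hE)

lemma tau_cong {S S' : ℕ → GP r} (hE : Eqn n S S') : Eqn n (tauT n S) (tauT n S') :=
  fun k _ => hE (n - k) (by omega)

lemma tau_tau (S : ℕ → GP r) : Eqn n (tauT n (tauT n S)) S := by
  intro k hk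
  show S (n - (n - k)) = S k
  rw [show n - (n - k) = k by omega]

/-! ### goodness of τ, ϖ, ε -/

lemma good_tau {T : ℕ → GP r} (hg : Good n T) : Good n (tauT n T) := by
  constructor
  · intro k _; exact hg.1 (n - k) (by omega)
  · intro j hj
    have := hg.2 (n - (j + 1)) (by omega)
    rw [show n - (j + 1) + 1 = n - j by omega] at this
    exact stp_symm this

lemma good_varpi {T : ℕ → GP r} (hg : Good n T) : Good n (varpiT T) := by
  constructor
  · intro k hk; exact revNeg_antitone (hg.1 k hk)
  · intro j hj
    rcases hg.2 j hj with h | h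
    · right; intro i
      have := h i.rev
      simp only [varpiT, revNeg]
      omega
    · left; intro i
      have := h i.rev
      simp only [varpiT, revNeg]
      omega

lemma eps_eq_varpi_tau (S : ℕ → GP r) : epsT n S = varpiT (tauT n S) := rfl

lemma good_eps {T : ℕ → GP r} (hg : Good n T) : Good n (epsT n T) := by
  rw [eps_eq_varpi_tau]; exact good_varpi (good_tau hg)

end Word3

/-- **Lemma.** For a length-`n` skew fluctuating tableau `T`:
`E(T) = ε(T)` iff `E*(T) = ε(T)`; the conditions `E(T) = E*(T)` and `P^n(T) = T` are
equivalent; and `E(T) = ε(T)` implies them.  (Equalities of tableaux are equalities of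
the `n+1` recorded shapes.) -/
theorem evacuation_epsilon_equivalences
    (r n : ℕ) (T : ℕ → GP r) (c : ℕ → ℤ) (hT : IsSkewFT r n T c) :
    ((∀ k ≤ n, evac n T k = epsT n T k) ↔ (∀ k ≤ n, devac n T k = epsT n T k)) ∧
    ((∀ k ≤ n, evac n T k = devac n T k) ↔ (∀ k ≤ n, (promo n)^[n] T k = T k)) ∧
    ((∀ k ≤ n, evac n T k = epsT n T k) → ∀ k ≤ n, evac n T k = devac n T k) := by
  have hg : Good n T := good_of_isSkewFT hT
  rcases Nat.eq_zero_or_pos n with hn0 | hn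
  · subst hn0
    exact ⟨Iff.rfl, iff_of_true (fun _ _ => rfl) (fun _ _ => rfl), fun _ _ _ => rfl⟩
  · have hn1 : (n - 1) + 1 ≤ n := by omega
    have einv : ∀ S : ℕ → GP r, Good n S → evac n (evac n S) = S :=
      fun S h => evac_invol (n - 1) hn1 S h
    have dinv : ∀ S : ℕ → GP r, Good n S → devac n (devac n S) = S :=
      fun S h => devac_invol (n - 1) hn1 S h
    have K3 : ∀ S : ℕ → GP r, evac n (tauT n S) = tauT n (devac n S) :=
      fun S => evac_tau (n - 1) hn1 S
    have Evarpi : ∀ S : ℕ → GP r, evac n (varpiT S) = varpiT (evac n S) :=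
      fun S => evacAux_varpi (n - 1) S
    have Dvarpi : ∀ S : ℕ → GP r, devac n (varpiT S) = varpiT (devac n S) :=
      fun S => devacAux_varpi (n - 1) S
    have Econg : ∀ {S S' : ℕ → GP r}, Eqn n S S' → Eqn n (evac n S) (evac n S') :=
      fun h => evacAux_cong (n - 1) hn1 h
    have Dcong : ∀ {S S' : ℕ → GP r}, Eqn n S S' → Eqn n (devac n S) (devac n S') :=
      fun h => devacAux_cong (n - 1) hn1 h
    have tau_eq : ∀ S : ℕ → GP r, tauT n S = varpiT (epsT n S) := by
      intro S; funext k
      show S (n - k) = revNeg (revNeg (S (n - k)))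
      rw [revNeg_revNeg]
    have c1f : (∀ k ≤ n, evac n T k = epsT n T k) → ∀ k ≤ n, devac n T k = epsT n T k := by
      intro hE k hk
      have h1 : Eqn n (epsT n T) (evac n T) := fun k' hk' => (hE k' hk').symm
      have h3 : ∀ k' ≤ n, evac n (epsT n T) k' = T k' := by
        intro k' hk'
        rw [Econg h1 k' hk', congrFun (einv T hg) k']
      have step1 : devac n T k = tauT n (devac n T) (n - k) := by
        show devac n T k = devac n T (n - (n - k))
        rw [show n - (n - k) = k by omega]
      rw [step1, ← K3 T, tau_eq T, Evarpi]
      show revNeg (evac n (epsT n T) (n - k)) = epsT n T k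
      rw [h3 (n - k) (by omega)]
      rfl
    have c1b : (∀ k ≤ n, devac n T k = epsT n T k) → ∀ k ≤ n, evac n T k = epsT n T k := by
      intro hD k hk
      have h1 : Eqn n (epsT n T) (devac n T) := fun k' hk' => (hD k' hk').symm
      have h3 : ∀ k' ≤ n, devac n (epsT n T) k' = T k' := by
        intro k' hk'
        rw [Dcong h1 k' hk', congrFun (dinv T hg) k']
      have step1 : evac n T k = evac n (tauT n (tauT n T)) k := (Econg (tau_tau T) k hk).symm
      rw [step1, K3 (tauT n T)]
      show devac n (tauT n T) (n - k) = epsT n T k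
      rw [tau_eq T, Dvarpi]
      show revNeg (devac n (epsT n T) (n - k)) = epsT n T k
      rw [h3 (n - k) (by omega)]
      rfl
    refine ⟨⟨c1f, c1b⟩, ⟨?_, ?_⟩, ?_⟩
    · intro hED k hk
      calc (promo n)^[n] T k = devac n (evac n T) k := (congrFun (mainP n T) k).symm
        _ = devac n (devac n T) k := Dcong hED k hk
        _ = T k := congrFun (dinv T hg) k
    · intro hP k hk
      have h1 : Eqn n (devac n (evac n T)) T :=
        fun k' hk' => (congrFun (mainP n T) k').trans (hP k' hk')
      calc evac n T k
          = devac n (devac n (evac n T)) k :=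
            (congrFun (dinv (evac n T) (evacAux_good (n - 1) hn1 T hg)) k).symm
        _ = devac n T k := Dcong h1 k hk
    · intro hE k hk
      rw [hE k hk]
      exact (c1f hE k hk).symm

end FT
end
end

section
/- Let κ, λ, ν be r-row generalized partitions with κ →^c λ and λ →^d ν, and set μ := sort(ν + κ − λ) (componentwise arithmetic). Then μ is an r-row generalized partition satisfying κ →^d μ and μ →^c ν, and moreover λ = sort(ν + κ − μ). -/
open scoped Classical

noncomputable section

namespace FT

namespace LRaux


variable {r : ℕ}

/-- count of entries ≥ b -/
def cnt (x : GP r) (b : ℤ) : ℕ := (Finset.univ.filter fun i => b ≤ x i).card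

lemma sortDesc_antitone (α : GP r) : Antitone (sortDesc α) := by
  intro i j hij
  exact Tuple.monotone_sort α (Fin.rev_le_rev.mpr hij)

lemma sortDesc_apply (α : GP r) (i : Fin r) :
    sortDesc α i = α ((Fin.revPerm.trans (Tuple.sort α)) i) := rfl

lemma cnt_sortDesc (α : GP r) (b : ℤ) : cnt (sortDesc α) b = cnt α b := by
  classical
  apply Finset.card_equiv (Fin.revPerm.trans (Tuple.sort α))
  intro i
  simp [sortDesc_apply]

lemma sum_sortDesc (α : GP r) : ∑ i, sortDesc α i = ∑ i, α i := by
  classical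
  rw [show (fun i => sortDesc α i) = fun i => α ((Fin.revPerm.trans (Tuple.sort α)) i) from rfl]
  exact Equiv.sum_comp _ α

lemma le_of_cnt (x : GP r) (hx : Antitone x) (i : Fin r) (b : ℤ)
    (h : (i : ℕ) + 1 ≤ cnt x b) : b ≤ x i := by
  by_contra hbx
  push_neg at hbx
  have hsub : (Finset.univ.filter fun j => b ≤ x j) ⊆ Finset.Iio i := by
    intro j hj
    simp only [Finset.mem_filter, Finset.mem_univ, true_and] at hj
    rw [Finset.mem_Iio]
    by_contra hji
    push_neg at hji
    exact absurd (le_trans hj (hx hji)) (not_le.mpr hbx)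
  have := Finset.card_le_card hsub
  rw [Fin.card_Iio] at this
  unfold cnt at h
  omega

lemma ge_of_cnt (x : GP r) (hx : Antitone x) (i : Fin r) (b : ℤ)
    (h : cnt x (b + 1) ≤ (i : ℕ)) : x i ≤ b := by
  by_contra hbx
  push_neg at hbx
  have hsub : Finset.Iic i ⊆ (Finset.univ.filter fun j => b + 1 ≤ x j) := by
    intro j hj
    rw [Finset.mem_Iic] at hj
    simp only [Finset.mem_filter, Finset.mem_univ, true_and]
    exact le_trans (by omega) (hx hj)
  have := Finset.card_le_card hsub
  rw [Fin.card_Iic] at this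
  unfold cnt at h
  omega

lemma cnt_self (x : GP r) (hx : Antitone x) (i : Fin r) :
    (i : ℕ) + 1 ≤ cnt x (x i) := by
  have hsub : Finset.Iic i ⊆ (Finset.univ.filter fun j => x i ≤ x j) := by
    intro j hj
    rw [Finset.mem_Iic] at hj
    simp only [Finset.mem_filter, Finset.mem_univ, true_and]
    exact hx hj
  have := Finset.card_le_card hsub
  rw [Fin.card_Iic] at this
  unfold cnt
  omega

lemma eq_of_antitone_cnt (x y : GP r) (hx : Antitone x) (hy : Antitone y)
    (h : ∀ b, cnt x b = cnt y b) : x = y := by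
  funext i
  have h1 : x i ≤ y i := le_of_cnt y hy i (x i) (by rw [← h]; exact cnt_self x hx i)
  have h2 : y i ≤ x i := le_of_cnt x hx i (y i) (by rw [h]; exact cnt_self y hy i)
  omega

/-- bounds for the sorted perturbed partition -/
lemma sort_bounds (κ α : GP r) (hκ : Antitone κ) (ε : ℤ) (hε : ε = 1 ∨ ε = -1)
    (hα : ∀ i, α i = κ i ∨ α i = κ i + ε) (i : Fin r) :
    sortDesc α i = κ i ∨ sortDesc α i = κ i + ε := by
  have hs := sortDesc_antitone α
  rcases hε with h1 | h1
  · subst h1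
    have low : κ i ≤ sortDesc α i := by
      apply le_of_cnt _ hs i
      rw [cnt_sortDesc]
      refine le_trans ?_ (Finset.card_le_card (show Finset.Iic i ⊆
        (Finset.univ.filter fun j => κ i ≤ α j) from ?_))
      · rw [Fin.card_Iic]
      · intro j hj
        rw [Finset.mem_Iic] at hj
        simp only [Finset.mem_filter, Finset.mem_univ, true_and]
        have := hκ hj
        rcases hα j with h | h <;> omega
    have high : sortDesc α i ≤ κ i + 1 := by
      apply ge_of_cnt _ hs i
      rw [cnt_sortDesc]
      refine le_trans (Finset.card_le_card (show
        (Finset.univ.filter fun j => κ i + 1 + 1 ≤ α j) ⊆ Finset.Iio i from ?_)) ?_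
      · intro j hj
        simp only [Finset.mem_filter, Finset.mem_univ, true_and] at hj
        rw [Finset.mem_Iio]
        by_contra hji
        push_neg at hji
        have := hκ hji
        rcases hα j with h | h <;> omega
      · rw [Fin.card_Iio]
    omega
  · subst h1
    have low : κ i + (-1) ≤ sortDesc α i := by
      apply le_of_cnt _ hs i
      rw [cnt_sortDesc]
      refine le_trans ?_ (Finset.card_le_card (show Finset.Iic i ⊆
        (Finset.univ.filter fun j => κ i + (-1) ≤ α j) from ?_))
      · rw [Fin.card_Iic]
      · intro j hj
        rw [Finset.mem_Iic] at hj
        simp only [Finset.mem_filter, Finset.mem_univ, true_and]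
        have := hκ hj
        rcases hα j with h | h <;> omega
    have high : sortDesc α i ≤ κ i := by
      apply ge_of_cnt _ hs i
      rw [cnt_sortDesc]
      refine le_trans (Finset.card_le_card (show
        (Finset.univ.filter fun j => κ i + 1 ≤ α j) ⊆ Finset.Iio i from ?_)) ?_
      · intro j hj
        simp only [Finset.mem_filter, Finset.mem_univ, true_and] at hj
        rw [Finset.mem_Iio]
        by_contra hji
        push_neg at hji
        have := hκ hji
        rcases hα j with h | h <;> omega
      · rw [Fin.card_Iio]
    omega

/-- sum of differences counts the changed entries, on any set -/
lemma sum_sub_eq (x y : GP r) (ε : ℤ)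
    (h : ∀ i, x i = y i ∨ x i = y i + ε) (A : Finset (Fin r)) :
    ∑ i ∈ A, (x i - y i) = ε * ((A.filter fun i => x i ≠ y i).card : ℤ) := by
  classical
  rw [← Finset.sum_filter_add_sum_filter_not A (fun i => x i ≠ y i)]
  have h2 : ∑ i ∈ A.filter (fun i => ¬ x i ≠ y i), (x i - y i) = 0 := by
    apply Finset.sum_eq_zero
    intro i hi
    simp only [Finset.mem_filter, not_not] at hi
    omega
  by_cases hε : ε = 0
  · subst hε
    have : (A.filter fun i => x i ≠ y i) = ∅ := by
      apply Finset.filter_eq_empty_iff.mpr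
      intro i _
      rcases h i with h' | h' <;> omega
    rw [this, h2]
    simp
  · have h1 : ∑ i ∈ A.filter (fun i => x i ≠ y i), (x i - y i) =
        ∑ _i ∈ A.filter (fun i => x i ≠ y i), ε := by
      apply Finset.sum_congr rfl
      intro i hi
      simp only [Finset.mem_filter] at hi
      rcases h i with h' | h' <;> omega
    rw [h1, h2, Finset.sum_const, add_zero, nsmul_eq_mul, mul_comm]

lemma split_pos (κ z : GP r) (hz : ∀ i, z i = κ i ∨ z i = κ i + 1) (v : ℤ) :
    cnt z (v + 1) = cnt κ (v + 1) +
      ((Finset.univ.filter fun i => κ i = v ∧ z i ≠ κ i).card) := by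
  classical
  unfold cnt
  rw [← Finset.card_union_of_disjoint]
  · congr 1
    ext i
    simp only [Finset.mem_filter, Finset.mem_univ, true_and, Finset.mem_union]
    rcases hz i with h | h <;> constructor <;> intro hh <;> omega
  · rw [Finset.disjoint_filter]
    intro i _ hi hmem
    omega

lemma split_neg (κ z : GP r) (hz : ∀ i, z i = κ i ∨ z i = κ i - 1) (v : ℤ) :
    cnt z v = cnt κ (v + 1) +
      ((Finset.univ.filter fun i => κ i = v ∧ ¬ z i ≠ κ i).card) := by
  classical
  unfold cnt
  rw [← Finset.card_union_of_disjoint]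
  · congr 1
    ext i
    simp only [Finset.mem_filter, Finset.mem_univ, true_and, Finset.mem_union, not_not]
    rcases hz i with h | h <;> constructor <;> intro hh <;> omega
  · rw [Finset.disjoint_filter]
    intro i _ hi hmem
    rw [not_not] at hmem
    omega

/-- per-level (fiber of κ) counts of modified entries agree for two perturbations
with equal `cnt` profiles. -/
lemma lvl_card_eq (κ x y : GP r) (ε : ℤ) (hε : ε = 1 ∨ ε = -1)
    (hx : ∀ i, x i = κ i ∨ x i = κ i + ε) (hy : ∀ i, y i = κ i ∨ y i = κ i + ε)
    (hcnt : ∀ b, cnt x b = cnt y b) (v : ℤ) :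
    ((Finset.univ.filter fun i => κ i = v ∧ x i ≠ κ i).card) =
    ((Finset.univ.filter fun i => κ i = v ∧ y i ≠ κ i).card) := by
  classical
  rcases hε with h1 | h1
  · subst h1
    have ex := split_pos κ x hx v
    have ey := split_pos κ y hy v
    rw [hcnt (v + 1)] at ex
    omega
  · subst h1
    have hx' : ∀ i, x i = κ i ∨ x i = κ i - 1 := by intro i; rcases hx i with h | h <;> omega
    have hy' : ∀ i, y i = κ i ∨ y i = κ i - 1 := by intro i; rcases hy i with h | h <;> omega
    have ex := split_neg κ x hx' v
    have ey := split_neg κ y hy' v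
    rw [hcnt v] at ex
    have hx2 := Finset.card_filter_add_card_filter_not
      (s := Finset.univ.filter fun i : Fin r => κ i = v) (p := fun i => x i ≠ κ i)
    have hy2 := Finset.card_filter_add_card_filter_not
      (s := Finset.univ.filter fun i : Fin r => κ i = v) (p := fun i => y i ≠ κ i)
    rw [Finset.filter_filter, Finset.filter_filter] at hx2 hy2
    omega




lemma master (κ lam ν : GP r) (ε₁ ε₂ : ℤ)
    (hε₁ : ε₁ = 1 ∨ ε₁ = -1) (hε₂ : ε₂ = 1 ∨ ε₂ = -1)
    (s t : GP r) (hs : ∀ i, s i = 0 ∨ s i = 1) (ht : ∀ i, t i = 0 ∨ t i = 1)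
    (hκ : Antitone κ) (hlam : Antitone lam) (hν : Antitone ν)
    (hLeq : ∀ i, lam i = κ i + ε₁ * s i) (hνeq : ∀ i, ν i = lam i + ε₂ * t i) :
    Antitone (sortDesc (ν + κ - lam)) ∧
    (∃ T' : Finset (Fin r), ((T'.card : ℤ) = ∑ i, t i ∧
      ∀ i, sortDesc (ν + κ - lam) i = κ i + ε₂ * (if i ∈ T' then 1 else 0))) ∧
    (∃ S' : Finset (Fin r), ((S'.card : ℤ) = ∑ i, s i ∧
      ∀ i, ν i = sortDesc (ν + κ - lam) i + ε₁ * (if i ∈ S' then 1 else 0))) ∧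
    lam = sortDesc (ν + κ - sortDesc (ν + κ - lam)) := by
  classical
  set α : GP r := ν + κ - lam with hα
  set μ : GP r := sortDesc α with hμ
  have hαi : ∀ i, α i = ν i + κ i - lam i := fun i => rfl
  have hε₁0 : ε₁ = 1 ∨ ε₁ = -1 := hε₁
  -- pointwise descriptions of α
  have hακ : ∀ i, α i = κ i ∨ α i = κ i + ε₂ := by
    intro i
    have h2 := hνeq i
    rcases ht i with h | h
    · left; rw [hαi i]; rw [h, mul_zero] at h2; omega
    · right; rw [hαi i]; rw [h, mul_one] at h2; omega
  have hαν : ∀ i, α i = ν i ∨ α i = ν i + (-ε₁) := by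
    intro i
    have h1 := hLeq i
    rcases hs i with h | h
    · left; rw [hαi i]; rw [h, mul_zero] at h1; omega
    · right; rw [hαi i]; rw [h, mul_one] at h1; omega
  have hμκ : ∀ i, μ i = κ i ∨ μ i = κ i + ε₂ := fun i => sort_bounds κ α hκ ε₂ hε₂ hακ i
  have hμν : ∀ i, ν i = μ i ∨ ν i = μ i + ε₁ := by
    intro i
    have := sort_bounds ν α hν (-ε₁) (by rcases hε₁ with h | h <;> simp [h]) hαν i
    rcases this with h | h
    · left; rw [← hμ] at h; omega
    · right; rw [← hμ] at h; omega
  have hμanti : Antitone μ := sortDesc_antitone α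
  have hcnt : ∀ b, cnt μ b = cnt α b := fun b => cnt_sortDesc α b
  have hsum : ∑ i, μ i = ∑ i, α i := sum_sortDesc α
  -- the modified sets
  refine ⟨hμanti, ?_, ?_, ?_⟩
  · -- T' : μ = κ + ε₂ χ
    refine ⟨Finset.univ.filter fun i => μ i ≠ κ i, ?_, ?_⟩
    · have h1 := sum_sub_eq μ κ ε₂ hμκ Finset.univ
      have h2 : ∑ i, (μ i - κ i) = ε₂ * ∑ i, t i := by
        have : ∑ i, (μ i - κ i) = ∑ i, μ i - ∑ i, κ i := by
          rw [Finset.sum_sub_distrib]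
        rw [this, hsum, ← Finset.sum_sub_distrib]
        have : ∀ i ∈ Finset.univ, α i - κ i = ε₂ * t i := by
          intro i _
          have h3 := hLeq i; have h4 := hνeq i
          rw [hαi i]; omega
        rw [Finset.sum_congr rfl this, Finset.mul_sum]
      have hne : ε₂ ≠ 0 := by rcases hε₂ with h | h <;> omega
      have := h1.symm.trans h2
      exact mul_left_cancel₀ hne this
    · intro i
      by_cases hm : μ i = κ i
      · simp [hm, Finset.mem_filter]
      · have h : μ i = κ i + ε₂ := (hμκ i).resolve_left hm
        rw [if_pos (Finset.mem_filter.mpr ⟨Finset.mem_univ i, hm⟩), mul_one]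
        exact h
  · -- S' : ν = μ + ε₁ χ
    refine ⟨Finset.univ.filter fun i => ν i ≠ μ i, ?_, ?_⟩
    · have h1 := sum_sub_eq ν μ ε₁ hμν Finset.univ
      have h2 : ∑ i, (ν i - μ i) = ε₁ * ∑ i, s i := by
        have e1 : ∑ i, (ν i - μ i) = ∑ i, ν i - ∑ i, μ i := Finset.sum_sub_distrib _ _
        rw [e1, hsum, ← Finset.sum_sub_distrib]
        have : ∀ i ∈ Finset.univ, ν i - α i = ε₁ * s i := by
          intro i _
          have h3 := hLeq i
          rw [hαi i]; omega
        rw [Finset.sum_congr rfl this, Finset.mul_sum]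
      have hne : ε₁ ≠ 0 := by rcases hε₁ with h | h <;> omega
      exact mul_left_cancel₀ hne (h1.symm.trans h2)
    · intro i
      by_cases hm : ν i = μ i
      · simp [hm, Finset.mem_filter]
      · have h : ν i = μ i + ε₁ := (hμν i).resolve_left hm
        rw [if_pos (Finset.mem_filter.mpr ⟨Finset.mem_univ i, hm⟩), mul_one]
        exact h
  · -- involution
    set β : GP r := ν + κ - μ with hβ
    have hβi : ∀ i, β i = ν i + κ i - μ i := fun i => rfl
    have hβκ : ∀ i, β i = κ i ∨ β i = κ i + ε₁ := by
      intro i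
      rcases hμν i with h | h
      · left; rw [hβi i]; omega
      · right; rw [hβi i]; omega
    have hLk : ∀ i, lam i = κ i ∨ lam i = κ i + ε₁ := by
      intro i
      have h1 := hLeq i
      rcases hs i with h | h
      · left; rw [h] at h1; omega
      · right; rw [h] at h1; omega
    -- per-level counts agree for β and lam
    have hlvl : ∀ v : ℤ,
        ((Finset.univ.filter fun i => κ i = v ∧ β i ≠ κ i).card : ℤ) =
        ((Finset.univ.filter fun i => κ i = v ∧ lam i ≠ κ i).card : ℤ) := by
      intro v
      set A : Finset (Fin r) := Finset.univ.filter fun i => κ i = v with hA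
      -- sum over fiber
      have e1 : ∑ i ∈ A, (β i - κ i) = ∑ i ∈ A, (lam i - κ i) := by
        have eβ : ∀ i ∈ A, β i - κ i = (ν i - κ i) - (μ i - κ i) := by
          intro i _; rw [hβi i]; ring
        have eL : ∀ i ∈ A, lam i - κ i = (ν i - κ i) - (α i - κ i) := by
          intro i _; rw [hαi i]; ring
        have key : ∑ i ∈ A, (μ i - κ i) = ∑ i ∈ A, (α i - κ i) := by
          rw [sum_sub_eq μ κ ε₂ hμκ A, sum_sub_eq α κ ε₂ hακ A]
          have hcard : (A.filter fun i => μ i ≠ κ i).card =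
              (A.filter fun i => α i ≠ κ i).card := by
            rw [hA, Finset.filter_filter, Finset.filter_filter]
            exact lvl_card_eq κ μ α ε₂ hε₂ hμκ hακ hcnt v
          rw [hcard]
        rw [Finset.sum_congr rfl eβ, Finset.sum_congr rfl eL,
          Finset.sum_sub_distrib (f := fun i => ν i - κ i) (g := fun i => μ i - κ i),
          Finset.sum_sub_distrib (f := fun i => ν i - κ i) (g := fun i => α i - κ i), key]
      have hβA := sum_sub_eq β κ ε₁ hβκ A
      have hLA := sum_sub_eq lam κ ε₁ hLk A
      rw [hβA, hLA] at e1
      have hne : ε₁ ≠ 0 := by rcases hε₁ with h | h <;> omega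
      have := mul_left_cancel₀ hne e1
      rw [hA, Finset.filter_filter, Finset.filter_filter] at this
      exact this
    have hlvlN : ∀ v : ℤ,
        ((Finset.univ.filter fun i => κ i = v ∧ β i ≠ κ i).card) =
        ((Finset.univ.filter fun i => κ i = v ∧ lam i ≠ κ i).card) := by
      intro v; exact_mod_cast hlvl v
    -- cnt β = cnt lam
    have hcntBL : ∀ b, cnt β b = cnt lam b := by
      intro b
      rcases hε₁ with h1 | h1
      · subst h1
        have eβ := split_pos κ β (by intro i; rcases hβκ i with h | h <;> omega) (b - 1)
        have eL := split_pos κ lam (by intro i; rcases hLk i with h | h <;> omega) (b - 1)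
        rw [show b - 1 + 1 = b by ring] at eβ eL
        rw [eβ, eL, hlvlN (b - 1)]
      · subst h1
        have hβ' : ∀ i, β i = κ i ∨ β i = κ i - 1 := by
          intro i; rcases hβκ i with h | h <;> omega
        have hL' : ∀ i, lam i = κ i ∨ lam i = κ i - 1 := by
          intro i; rcases hLk i with h | h <;> omega
        have eβ := split_neg κ β hβ' b
        have eL := split_neg κ lam hL' b
        rw [eβ, eL]
        congr 1
        have hβ2 := Finset.card_filter_add_card_filter_not
          (s := Finset.univ.filter fun i : Fin r => κ i = b) (p := fun i => β i ≠ κ i)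
        have hL2 := Finset.card_filter_add_card_filter_not
          (s := Finset.univ.filter fun i : Fin r => κ i = b) (p := fun i => lam i ≠ κ i)
        rw [Finset.filter_filter, Finset.filter_filter] at hβ2 hL2
        have := hlvlN b
        omega
    -- conclude
    have h1 : ∀ b, cnt lam b = cnt (sortDesc β) b := by
      intro b
      rw [cnt_sortDesc, hcntBL b]
    exact eq_of_antitone_cnt lam (sortDesc β) hlam (sortDesc_antitone β) h1




lemma sum_indV {r : ℕ} (S : Finset (Fin r)) : ∑ i, indV S i = (S.card : ℤ) := by
  classical
  unfold indV
  rw [Finset.sum_ite_mem, Finset.univ_inter, Finset.sum_const, nsmul_eq_mul, mul_one]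

lemma indV01 {r : ℕ} (S : Finset (Fin r)) : ∀ i, indV S i = 0 ∨ indV S i = 1 := by
  intro i
  unfold indV
  by_cases h : i ∈ S <;> simp [h]


end LRaux

/-- **Lemma (local rules are well defined).** If `κ →^c λ` and `λ →^d ν` are
skew-column steps of `r`-row generalized partitions and `μ = sort(ν + κ - λ)`, then
`μ` is a generalized partition with `κ →^d μ` and `μ →^c ν`, and moreover
`λ = sort(ν + κ - μ)`. -/
theorem local_rule_well_defined
    (r : ℕ) (κ lam ν : GP r) (c d : ℤ)
    (hκ : Antitone κ) (hlam : Antitone lam) (hν : Antitone ν)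
    (h1 : colStep r c κ lam) (h2 : colStep r d lam ν) :
    Antitone (sortDesc (ν + κ - lam)) ∧
    colStep r d κ (sortDesc (ν + κ - lam)) ∧
    colStep r c (sortDesc (ν + κ - lam)) ν ∧
    lam = sortDesc (ν + κ - sortDesc (ν + κ - lam)) := by
  classical
  obtain ⟨S, hScard, hSif⟩ := h1
  obtain ⟨T, hTcard, hTif⟩ := h2
  set ε₁ : ℤ := if 0 ≤ c then 1 else -1 with he1
  set ε₂ : ℤ := if 0 ≤ d then 1 else -1 with he2
  have hε₁ : ε₁ = 1 ∨ ε₁ = -1 := by by_cases h : 0 ≤ c <;> simp [he1, h]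
  have hε₂ : ε₂ = 1 ∨ ε₂ = -1 := by by_cases h : 0 ≤ d <;> simp [he2, h]
  have hLeq : ∀ i, lam i = κ i + ε₁ * (indV S i) := by
    intro i
    by_cases h : 0 ≤ c
    · rw [if_pos h] at hSif
      rw [hSif, he1, if_pos h, one_mul]
      rfl
    · rw [if_neg h] at hSif
      rw [hSif, he1, if_neg h]
      show κ i - indV S i = κ i + -1 * indV S i
      ring
  have hNeq : ∀ i, ν i = lam i + ε₂ * (indV T i) := by
    intro i
    by_cases h : 0 ≤ d
    · rw [if_pos h] at hTif
      rw [hTif, he2, if_pos h, one_mul]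
      rfl
    · rw [if_neg h] at hTif
      rw [hTif, he2, if_neg h]
      show lam i - indV T i = lam i + -1 * indV T i
      ring
  obtain ⟨hAnti, ⟨T', hT'c, hT'⟩, ⟨S', hS'c, hS'⟩, hinv⟩ :=
    LRaux.master κ lam ν ε₁ ε₂ hε₁ hε₂ (indV S) (indV T)
      (LRaux.indV01 S) (LRaux.indV01 T) hκ hlam hν hLeq hNeq
  rw [LRaux.sum_indV] at hT'c hS'c
  refine ⟨hAnti, ⟨T', ?_, ?_⟩, ⟨S', ?_, ?_⟩, hinv⟩
  · have : T'.card = T.card := by exact_mod_cast hT'c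
    rw [this, hTcard]
  · by_cases h : 0 ≤ d
    · rw [if_pos h]
      funext i
      have := hT' i
      rw [he2, if_pos h, one_mul] at this
      exact this
    · rw [if_neg h]
      funext i
      have := hT' i
      rw [he2, if_neg h] at this
      show sortDesc (ν + κ - lam) i = κ i - (if i ∈ T' then (1:ℤ) else 0)
      rw [this]; ring
  · have : S'.card = S.card := by exact_mod_cast hS'c
    rw [this, hScard]
  · by_cases h : 0 ≤ c
    · rw [if_pos h]
      funext i
      have := hS' i
      rw [he1, if_pos h, one_mul] at this
      exact this
    · rw [if_neg h]
      funext i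
      have := hS' i
      rw [he1, if_neg h] at this
      show ν i = sortDesc (ν + κ - lam) i - (if i ∈ S' then (1:ℤ) else 0)
      rw [this]; ring


end FT
end
end
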